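/- If the spectral abscissa satisfies μ(B F* − D − L*) ≤ 0, then there exist a node i ∈ {1,…,n} and a layer α ∈ {1,…,m} such that δ^α_i ≥ β^α_i. -/

import Mathlib

/-!
If `δ^α_i < β^α_i` everywhere, `M = B F* − D − L*` is a Metzler matrix with positive row sums
`β^α_i − δ^α_i`: the rows of `F*` sum to `1` and, by stationarity of `π^α`, those of `L*` to `0`.
For large `s`, `M + s I` is entrywise nonnegative with row sums at least `ε + s`, so its powers
have `∞`-operator norm at least `(ε + s)^d`, and Gelfand's formula yields an eigenvalue `z` with
`‖z‖ ≥ ε + s`. Since the eigenvalue `z - s` of `M` lies in the disc of radius `‖M‖`, this forces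
`Re (z - s) > 0` once `s` is large, contradicting `μ(M) ≤ 0`.
-/

open Matrix BigOperators Finset

/-- Spectral abscissa of a real square matrix: the maximum of the real parts of its
(complex) eigenvalues. -/
noncomputable def specAbscissa {k : Type*} [Fintype k] [DecidableEq k]
    (M : Matrix k k ℝ) : ℝ :=
  sSup {r : ℝ | ∃ z ∈ spectrum ℂ (M.map Complex.ofReal), z.re = r}

/-- Diagonal `nm × nm` matrix (indexed by pairs `(α, i)`) built from rates `c^α_i`. -/
noncomputable def pairDiag {n m : ℕ} (c : Fin m → Fin n → ℝ) :
    Matrix (Fin m × Fin n) (Fin m × Fin n) ℝ :=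
  Matrix.diagonal fun q => c q.1 q.2

/-- The equilibrium dispersal Laplacian `L*`: block-diagonal, whose `α`-th `n × n` block
has `(i,i)` entry `ν^α_i = ∑_{j ≠ i} q^α_{ij}` and `(i,j)` entry `-q^α_{ji} π^α_j / π^α_i`
for `j ≠ i`. -/
noncomputable def Lstar {n m : ℕ} (Q : Fin m → Matrix (Fin n) (Fin n) ℝ)
    (piv : Fin m → Fin n → ℝ) : Matrix (Fin m × Fin n) (Fin m × Fin n) ℝ :=
  Matrix.of fun q q' =>
    if q.1 = q'.1 then
      (if q.2 = q'.2 then ∑ j ∈ Finset.univ \ {q.2}, Q q.1 q.2 j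
       else -(Q q.1 q'.2 q.2 * piv q.1 q'.2 / piv q.1 q.2))
    else 0

/-- The equilibrium population-fraction matrix `F*`: the `(α,σ)` block is the diagonal
matrix with entries `f^{*σ}_i = N^σ π^σ_i / ∑_τ N^τ π^τ_i` (the same row of blocks
repeated for every `α`). -/
noncomputable def Fstar {n m : ℕ} (N : Fin m → ℝ) (piv : Fin m → Fin n → ℝ) :
    Matrix (Fin m × Fin n) (Fin m × Fin n) ℝ :=
  Matrix.of fun q q' =>
    if q.2 = q'.2 then N q'.1 * piv q'.1 q.2 / ∑ τ, N τ * piv τ q.2 else 0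

theorem re_le_specAbscissa_of_mem_spectrum {k : Type*} [Fintype k] [DecidableEq k]
    {M : Matrix k k ℝ} {z : ℂ} (hz : z ∈ spectrum ℂ (M.map Complex.ofReal)) :
    z.re ≤ specAbscissa M :=
  le_csSup ((Matrix.finite_spectrum _).image Complex.re).bddAbove ⟨z, hz, rfl⟩

namespace Matrix

variable {k : Type*} [Fintype k] [DecidableEq k]

theorem pow_le_sum_pow_apply_of_nonneg {A : Matrix k k ℝ} {t : ℝ} (hA : ∀ p q, 0 ≤ A p q)
    (ht : 0 ≤ t) (hrow : ∀ p, t ≤ ∑ q, A p q) (d : ℕ) (p : k) :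
    t ^ d ≤ ∑ q, (A ^ d) p q := by
  have hsum : ∀ (B : Matrix k k ℝ) p, ∑ q, B p q = (B *ᵥ 1) p := fun B p => by
    simp [mulVec, dotProduct]
  simp only [hsum] at hrow ⊢
  induction d generalizing p with
  | zero => simp
  | succ d ih =>
    calc t ^ (d + 1) = t ^ d * t := pow_succ t d
      _ ≤ t ^ d * (A *ᵥ 1) p := mul_le_mul_of_nonneg_left (hrow p) (pow_nonneg ht d)
      _ = ∑ q, A p q * t ^ d := by rw [mul_comm, ← Finset.sum_mul]; simp [mulVec, dotProduct]
      _ ≤ ∑ q, A p q * (A ^ d *ᵥ 1) q :=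
          Finset.sum_le_sum fun q _ => mul_le_mul_of_nonneg_left (ih q) (hA p q)
      _ = (A ^ (d + 1) *ᵥ 1) p := by rw [pow_succ', ← mulVec_mulVec]; rfl

section LinftyNorm

attribute [local instance] Matrix.linftyOpNormedRing Matrix.linftyOpNormedAlgebra

theorem ofReal_le_spectralRadius_of_nonneg [Nonempty k] {A : Matrix k k ℝ} {t : ℝ}
    (hA : ∀ p q, 0 ≤ A p q) (ht : 0 ≤ t) (hrow : ∀ p, t ≤ ∑ q, A p q) :
    ENNReal.ofReal t ≤ spectralRadius ℂ (A.map Complex.ofReal) := by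
  obtain ⟨p₀⟩ := ‹Nonempty k›
  have hnorm (d : ℕ) : t ^ d ≤ ‖A.map Complex.ofReal ^ d‖ := by
    rw [show (Complex.ofReal : ℝ → ℂ) = Complex.ofRealHom from rfl, ← Matrix.map_pow]
    calc t ^ d ≤ ∑ q, (A ^ d) p₀ q := pow_le_sum_pow_apply_of_nonneg hA ht hrow d p₀
      _ ≤ ‖Complex.ofRealHom ((A ^ d *ᵥ 1) p₀)‖ := by
          rw [Complex.ofRealHom_eq_coe, Complex.norm_real, Real.norm_eq_abs]
          simpa [mulVec, dotProduct] using le_abs_self _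
      _ = ‖((A ^ d).map Complex.ofRealHom *ᵥ 1) p₀‖ := by
          rw [RingHom.map_mulVec, Pi.comp_one, map_one, Function.const_one]
      _ ≤ ‖(A ^ d).map Complex.ofRealHom *ᵥ 1‖ := norm_le_pi_norm _ p₀
      _ ≤ ‖(A ^ d).map Complex.ofRealHom‖ * ‖(1 : k → ℂ)‖ := linfty_opNorm_mulVec _ _
      _ = ‖(A ^ d).map Complex.ofRealHom‖ := by rw [norm_one, mul_one]
  refine ge_of_tendsto (spectrum.pow_nnnorm_pow_one_div_tendsto_nhds_spectralRadius _)
    (Filter.eventually_atTop.mpr ⟨1, fun d hd => ?_⟩)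
  have hd : (0 : ℝ) < d := by exact_mod_cast hd
  rw [one_div, ENNReal.le_rpow_inv_iff hd, ENNReal.rpow_natCast, ← ENNReal.ofReal_pow ht]
  exact (ENNReal.ofReal_le_ofReal (hnorm d)).trans_eq (ofReal_norm _)

theorem exists_mem_spectrum_le_norm_of_nonneg [Nonempty k] {A : Matrix k k ℝ} {t : ℝ}
    (hA : ∀ p q, 0 ≤ A p q) (ht : 0 ≤ t) (hrow : ∀ p, t ≤ ∑ q, A p q) :
    ∃ z ∈ spectrum ℂ (A.map Complex.ofReal), t ≤ ‖z‖ := by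
  obtain ⟨z, hz, hρ⟩ := spectrum.exists_nnnorm_eq_spectralRadius (A.map Complex.ofReal)
  refine ⟨z, hz, ?_⟩
  have := ofReal_le_spectralRadius_of_nonneg hA ht hrow
  rw [← hρ, ← enorm_eq_nnnorm, ← ofReal_norm] at this
  exact (ENNReal.ofReal_le_ofReal_iff (norm_nonneg _)).1 this

theorem exists_re_pos_mem_spectrum_of_metzler [Nonempty k] {M : Matrix k k ℝ}
    (hoff : ∀ p q, p ≠ q → 0 ≤ M p q) (hrow : ∀ p, 0 < ∑ q, M p q) :
    ∃ z ∈ spectrum ℂ (M.map Complex.ofReal), 0 < z.re := by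
  obtain ⟨p₀, -, hp₀⟩ := Finset.exists_min_image Finset.univ (fun p => ∑ q, M p q)
    Finset.univ_nonempty
  set ε := ∑ q, M p₀ q
  have hε : 0 < ε := hrow p₀
  set R := ‖M.map Complex.ofReal‖
  -- the shift `s` makes `M + s • 1` entrywise nonnegative and is large enough that `R ^ 2 ≤ ε s`
  set s := ∑ p, |M p p| + R ^ 2 / ε
  have hRs : R ^ 2 ≤ ε * s := by
    have : R ^ 2 = ε * (R ^ 2 / ε) := (mul_div_cancel₀ _ hε.ne').symm
    have : 0 ≤ ∑ p, |M p p| := Finset.sum_nonneg fun p _ => abs_nonneg _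
    nlinarith
  have hs : 0 ≤ s := by positivity
  have hA : ∀ p q, 0 ≤ (M + s • 1) p q := by
    intro p q
    rcases eq_or_ne p q with rfl | hpq
    · have : -M p p ≤ s := (neg_le_abs _).trans <| (Finset.single_le_sum
        (fun p _ => abs_nonneg (M p p)) (Finset.mem_univ p)).trans (le_add_of_nonneg_right
        (by positivity))
      simp only [add_apply, smul_apply, one_apply_eq, smul_eq_mul, mul_one]
      linarith
    · simpa [one_apply_ne hpq] using hoff p q hpq
  have hArow : ∀ p, ε + s ≤ ∑ q, (M + s • 1) p q := fun p => by
    simpa [Finset.sum_add_distrib, one_apply] using hp₀ p (Finset.mem_univ p)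
  obtain ⟨z, hz, hzs⟩ := exists_mem_spectrum_le_norm_of_nonneg hA (by positivity) hArow
  have hmap : (M + s • 1).map Complex.ofReal = algebraMap ℂ _ (s : ℂ) + M.map Complex.ofReal := by
    ext p q
    rcases eq_or_ne p q with rfl | hpq <;> simp [algebraMap_matrix_apply, *, add_comm]
  have hw : z - s ∈ spectrum ℂ (M.map Complex.ofReal) := by
    rw [hmap, ← sub_add_cancel z (s : ℂ)] at hz
    exact spectrum.add_mem_add_iff.1 hz
  refine ⟨z - s, hw, ?_⟩
  by_contra! hre
  have hR : ‖z - s‖ ≤ R := spectrum.norm_le_norm_of_mem hw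
  -- `‖z‖² = ‖z - s‖² + 2 s (z - s).re + s² ≤ R² + s² < (ε + s)²`
  have hz2 : ‖z‖ ^ 2 = z.re ^ 2 + z.im ^ 2 := by rw [Complex.sq_norm, Complex.normSq_apply]; ring
  have hw2 : ‖z - s‖ ^ 2 = (z.re - s) ^ 2 + z.im ^ 2 := by
    rw [Complex.sq_norm, Complex.normSq_apply, Complex.sub_re, Complex.sub_im, Complex.ofReal_re,
      Complex.ofReal_im, sub_zero]
    ring
  have : ‖z - s‖ ^ 2 ≤ R ^ 2 := pow_le_pow_left₀ (norm_nonneg _) hR 2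
  have : (ε + s) ^ 2 ≤ ‖z‖ ^ 2 := pow_le_pow_left₀ (by positivity) hzs 2
  simp only [Complex.sub_re, Complex.ofReal_re] at hre
  nlinarith

end LinftyNorm

end Matrix

section Model

variable {n m : ℕ}
variable {Q : Fin m → Matrix (Fin n) (Fin n) ℝ} {piv : Fin m → Fin n → ℝ} {N : Fin m → ℝ}
  {β δ : Fin m → Fin n → ℝ}

theorem pairDiag_mul_apply (c : Fin m → Fin n → ℝ) (A : Matrix (Fin m × Fin n) (Fin m × Fin n) ℝ)
    (p q : Fin m × Fin n) : (pairDiag c * A) p q = c p.1 p.2 * A p q := by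
  simp [pairDiag, Matrix.diagonal_mul]

theorem sum_pairDiag_apply (c : Fin m → Fin n → ℝ) (p : Fin m × Fin n) :
    ∑ q, pairDiag c p q = c p.1 p.2 := by
  simp [pairDiag, Matrix.diagonal_apply]

theorem Fstar_nonneg (hN : ∀ α, 0 ≤ N α) (hpiv : ∀ α i, 0 ≤ piv α i) (p q : Fin m × Fin n) :
    0 ≤ Fstar N piv p q := by
  simp only [Fstar, Matrix.of_apply]
  split_ifs
  · exact div_nonneg (mul_nonneg (hN _) (hpiv _ _))
      (Finset.sum_nonneg fun τ _ => mul_nonneg (hN τ) (hpiv τ _))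
  · exact le_rfl

theorem sum_Fstar_apply (p : Fin m × Fin n) (hS : ∑ τ, N τ * piv τ p.2 ≠ 0) :
    ∑ q, Fstar N piv p q = 1 := by
  simp only [Fstar, Matrix.of_apply, Fintype.sum_prod_type, Finset.sum_ite_eq, Finset.mem_univ,
    if_true]
  rw [← Finset.sum_div, div_self hS]

theorem Lstar_nonpos_of_ne (hQoff : ∀ α i j, i ≠ j → 0 ≤ Q α i j) (hpiv : ∀ α i, 0 ≤ piv α i)
    {p q : Fin m × Fin n} (hpq : p ≠ q) : Lstar Q piv p q ≤ 0 := by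
  simp only [Lstar, Matrix.of_apply]
  split_ifs with h₁ h₂
  · exact absurd (Prod.ext h₁ h₂) hpq
  · exact neg_nonpos.2 <| div_nonneg (mul_nonneg (hQoff _ _ _ (Ne.symm h₂)) (hpiv _ _)) (hpiv _ _)
  · exact le_rfl

theorem sum_Lstar_apply (p : Fin m × Fin n)
    (hQdiag : Q p.1 p.2 p.2 = -∑ j ∈ Finset.univ \ {p.2}, Q p.1 p.2 j)
    (hpiveig : ∑ j, Q p.1 j p.2 * piv p.1 j = 0) (hpiv : piv p.1 p.2 ≠ 0) :
    ∑ q, Lstar Q piv p q = 0 := by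
  obtain ⟨α, i⟩ := p
  have hlayer : ∑ q, Lstar Q piv (α, i) q = ∑ j, Lstar Q piv (α, i) (α, j) := by
    rw [Fintype.sum_prod_type, Finset.sum_eq_single_of_mem α (Finset.mem_univ α)]
    intro σ _ hσ
    simp [Lstar, Ne.symm hσ]
  have hbalance : ∑ j ∈ Finset.univ.erase i, Q α j i * piv α j
      = (∑ j ∈ Finset.univ.erase i, Q α i j) * piv α i := by
    rw [← Finset.add_sum_erase _ _ (Finset.mem_univ i), hQdiag,
      Finset.sdiff_singleton_eq_erase] at hpiveig
    linarith
  have hoff : ∀ j ∈ Finset.univ.erase i,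
      Lstar Q piv (α, i) (α, j) = -(Q α j i * piv α j / piv α i) := fun j hj => by
    simp [Lstar, (Finset.ne_of_mem_erase hj).symm]
  rw [hlayer, ← Finset.add_sum_erase _ _ (Finset.mem_univ i), Finset.sum_congr rfl hoff,
    Finset.sum_neg_distrib, ← Finset.sum_div, hbalance, mul_div_cancel_right₀ _ hpiv]
  simp [Lstar, Finset.sdiff_singleton_eq_erase]

theorem pairDiag_mul_Fstar_sub_pairDiag_sub_Lstar_nonneg_of_ne (hβ : ∀ α i, 0 ≤ β α i)
    (hN : ∀ α, 0 ≤ N α) (hpiv : ∀ α i, 0 ≤ piv α i) (hQoff : ∀ α i j, i ≠ j → 0 ≤ Q α i j)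
    {p q : Fin m × Fin n} (hpq : p ≠ q) :
    0 ≤ (pairDiag β * Fstar N piv - pairDiag δ - Lstar Q piv) p q := by
  rw [Matrix.sub_apply, Matrix.sub_apply, pairDiag_mul_apply, pairDiag,
    Matrix.diagonal_apply_ne _ hpq, sub_zero, sub_nonneg]
  exact (Lstar_nonpos_of_ne hQoff hpiv hpq).trans
    (mul_nonneg (hβ _ _) (Fstar_nonneg hN hpiv p q))

theorem sum_pairDiag_mul_Fstar_sub_pairDiag_sub_Lstar_apply (p : Fin m × Fin n)
    (hS : ∑ τ, N τ * piv τ p.2 ≠ 0)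
    (hQdiag : Q p.1 p.2 p.2 = -∑ j ∈ Finset.univ \ {p.2}, Q p.1 p.2 j)
    (hpiveig : ∑ j, Q p.1 j p.2 * piv p.1 j = 0) (hpiv : piv p.1 p.2 ≠ 0) :
    ∑ q, (pairDiag β * Fstar N piv - pairDiag δ - Lstar Q piv) p q = β p.1 p.2 - δ p.1 p.2 := by
  simp only [Matrix.sub_apply, Finset.sum_sub_distrib, pairDiag_mul_apply, ← Finset.mul_sum,
    sum_Fstar_apply p hS, sum_pairDiag_apply, sum_Lstar_apply p hQdiag hpiveig hpiv]
  ring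

end Model

theorem specAbscissa_nonpos_necessary_condition_some_node_general
    {n m : ℕ} (hn : 2 ≤ n) (hm : 1 ≤ m)
    (Q : Fin m → Matrix (Fin n) (Fin n) ℝ)
    (hQoff : ∀ (α : Fin m) (i j : Fin n), i ≠ j → 0 ≤ Q α i j)
    (hQdiag : ∀ (α : Fin m) (i : Fin n), Q α i i = -∑ j ∈ Finset.univ \ {i}, Q α i j)
    (piv : Fin m → Fin n → ℝ) (hpivpos : ∀ α i, 0 < piv α i)
    (hpiveig : ∀ (α : Fin m) (i : Fin n), ∑ j, Q α j i * piv α j = 0)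
    (N : Fin m → ℝ) (hN : ∀ α, 0 < N α)
    (β δ : Fin m → Fin n → ℝ)
    (hβ : ∀ α i, 0 < β α i)
    (hμ : specAbscissa (pairDiag β * Fstar N piv - pairDiag δ - Lstar Q piv) ≤ 0) :
    ∃ (i : Fin n) (α : Fin m), β α i ≤ δ α i := by
  by_contra! hlt
  have : Nonempty (Fin m) := ⟨⟨0, hm⟩⟩
  have : Nonempty (Fin n) := ⟨⟨0, by omega⟩⟩
  have hS (i : Fin n) : ∑ τ, N τ * piv τ i ≠ 0 :=
    (Finset.sum_pos (fun τ _ => mul_pos (hN τ) (hpivpos τ i)) Finset.univ_nonempty).ne'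
  obtain ⟨z, hz, hre⟩ := Matrix.exists_re_pos_mem_spectrum_of_metzler
    (fun p q hpq => pairDiag_mul_Fstar_sub_pairDiag_sub_Lstar_nonneg_of_ne (δ := δ)
      (fun α i => (hβ α i).le) (fun α => (hN α).le) (fun α i => (hpivpos α i).le) hQoff hpq)
    (fun p => by
      rw [sum_pairDiag_mul_Fstar_sub_pairDiag_sub_Lstar_apply p (hS p.2) (hQdiag p.1 p.2)
        (hpiveig p.1 p.2) (hpivpos p.1 p.2).ne']
      exact sub_pos.2 (hlt p.2 p.1))
  exact (hre.trans_le (re_le_specAbscissa_of_mem_spectrum hz)).not_ge hμ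

/-- If `μ(B F* − D − L*) ≤ 0`, then there exist a node `i` and a layer
`α` such that `δ^α_i ≥ β^α_i`. -/
theorem specAbscissa_nonpos_necessary_condition_some_node
    {n m : ℕ} (hn : 2 ≤ n) (hm : 1 ≤ m)
    (Q : Fin m → Matrix (Fin n) (Fin n) ℝ)
    (hQoff : ∀ (α : Fin m) (i j : Fin n), i ≠ j → 0 ≤ Q α i j)
    (hQdiag : ∀ (α : Fin m) (i : Fin n), Q α i i = -∑ j ∈ Finset.univ \ {i}, Q α i j)
    (hQirr : ∀ (α : Fin m) (i j : Fin n),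
      Relation.ReflTransGen (fun a b => 0 < Q α a b) i j)
    (piv : Fin m → Fin n → ℝ) (hpivpos : ∀ α i, 0 < piv α i)
    (hpiveig : ∀ (α : Fin m) (i : Fin n), ∑ j, Q α j i * piv α j = 0)
    (hpivsum : ∀ α, ∑ i, piv α i = 1)
    (N : Fin m → ℝ) (hN : ∀ α, 0 < N α)
    (β δ : Fin m → Fin n → ℝ)
    (hβ : ∀ α i, 0 < β α i) (hδ : ∀ α i, 0 ≤ δ α i)
    (hδpos : ∀ α, ∃ k, 0 < δ α k)
    (hμ : specAbscissa (pairDiag β * Fstar N piv - pairDiag δ - Lstar Q piv) ≤ 0) :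
    ∃ (i : Fin n) (α : Fin m), β α i ≤ δ α i :=
  specAbscissa_nonpos_necessary_condition_some_node_general hn hm Q hQoff hQdiag piv hpivpos hpiveig
    N hN β δ hβ hμ
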